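/- Klein's icosahedral invariants satisfy the relation 144𝔇² = -1728𝔅⁵ + 720𝔄𝔆𝔅³ - 80𝔄²𝔆²𝔅 + 64𝔄³(5𝔅² - 𝔄𝔆)² + 𝔆³ as polynomials in ζ₀, ζ₁, ζ₂. -/

import Mathlib

noncomputable section

def 𝔄 (z0 z1 z2 : ℂ) : ℂ := z0 ^ 2 + z1 * z2

def 𝔅 (z0 z1 z2 : ℂ) : ℂ :=
  8 * z0 ^ 4 * z1 * z2 - 2 * z0 ^ 2 * z1 ^ 2 * z2 ^ 2 + z1 ^ 3 * z2 ^ 3 - z0 * (z1 ^ 5 + z2 ^ 5)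

def 𝔆 (z0 z1 z2 : ℂ) : ℂ :=
  320 * z0 ^ 6 * z1 ^ 2 * z2 ^ 2 - 160 * z0 ^ 4 * z1 ^ 3 * z2 ^ 3
    + 20 * z0 ^ 2 * z1 ^ 4 * z2 ^ 4 + 6 * z1 ^ 5 * z2 ^ 5
    - 4 * z0 * (z1 ^ 5 + z2 ^ 5) * (32 * z0 ^ 4 - 20 * z0 ^ 2 * z1 * z2 + 5 * z1 ^ 2 * z2 ^ 2)
    + z1 ^ 10 + z2 ^ 10

def 𝔇 (z0 z1 z2 : ℂ) : ℂ :=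
  ((z1 ^ 5 - z2 ^ 5) * (-1024 * z0 ^ 10 + 3840 * z0 ^ 8 * z1 * z2 - 3840 * z0 ^ 6 * z1 ^ 2 * z2 ^ 2
      + 1200 * z0 ^ 4 * z1 ^ 3 * z2 ^ 3 - 100 * z0 ^ 2 * z1 ^ 4 * z2 ^ 4 + z1 ^ 5 * z2 ^ 5)
    + z0 * (z1 ^ 10 - z2 ^ 10) * (352 * z0 ^ 4 - 160 * z0 ^ 2 * z1 * z2 + 10 * z1 ^ 2 * z2 ^ 2)
    + (z1 ^ 15 - z2 ^ 15)) / 12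

theorem stmt13 : ∀ z0 z1 z2 : ℂ,
    144 * 𝔇 z0 z1 z2 ^ 2 =
      -1728 * 𝔅 z0 z1 z2 ^ 5 + 720 * 𝔄 z0 z1 z2 * 𝔆 z0 z1 z2 * 𝔅 z0 z1 z2 ^ 3
        - 80 * 𝔄 z0 z1 z2 ^ 2 * 𝔆 z0 z1 z2 ^ 2 * 𝔅 z0 z1 z2
        + 64 * 𝔄 z0 z1 z2 ^ 3 * (5 * 𝔅 z0 z1 z2 ^ 2 - 𝔄 z0 z1 z2 * 𝔆 z0 z1 z2) ^ 2
        + 𝔆 z0 z1 z2 ^ 3 := by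
  intro z0 z1 z2
  simp only [𝔄, 𝔅, 𝔆, 𝔇]
  ring
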